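/- The improper integrals ∫_{−1}^∞ (z³+1)^{−1/2} dz and ∫_{1}^∞ (z³−1)^{−1/2} dz converge, and with p* := (4/(9π³))·Γ(1/4)⁴ one has the closed-form evaluations (1/2)·p*^{−2/3}·∫_{−1}^∞ (z³+1)^{−1/2} dz = 3·(3/2)^{1/3}·π^{5/2}·Γ(1/3) / (4·Γ(1/4)^{8/3}·Γ(5/6)) and (1/2)·p*^{−2/3}·∫_{1}^∞ (z³−1)^{−1/2} dz = 3·(3/2)^{1/3}·π^{5/2}·Γ(7/6) / (2·Γ(1/4)^{8/3}·Γ(2/3)), where Γ is the Gamma function. -/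

import Mathlib

/-!
Each integral is reduced to Euler Beta integrals `∫₀¹ x^(a-1) (1-x)^(b-1) dx = Γ(a)Γ(b)/Γ(a+b)`.
For `z³ - 1` on `(1, ∞)` the substitution `z = u^(-1/3)` gives `B(1/6, 1/2)/3`. For `z³ + 1` the
range `(-1, ∞)` is split at `0`: `z = -t^(1/3)` on `(-1, 0)` gives `B(1/3, 1/2)/3` and
`z = (1/u - 1)^(1/3)` on `(0, ∞)` gives `B(1/6, 1/3)/3`. With `Γ(1/2) = √π` and the reflection
formula `Γ(1/6)Γ(5/6) = 2π` the two pieces combine to `√π Γ(1/3)/Γ(5/6)`.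
-/

noncomputable section

open Real MeasureTheory

def pStar : ℝ := (4 / (9 * π ^ 3)) * Real.Gamma (1 / 4) ^ 4

open Set

lemma ofReal_rpow_mul_one_sub_rpow (a b : ℝ) {x : ℝ} (hx : x ∈ Ioc (0 : ℝ) 1) :
    ((x ^ (a - 1) * (1 - x) ^ (b - 1) : ℝ) : ℂ) =
      (x : ℂ) ^ ((a : ℂ) - 1) * (1 - (x : ℂ)) ^ ((b : ℂ) - 1) := by
  rw [Complex.ofReal_mul, Complex.ofReal_cpow hx.1.le, Complex.ofReal_cpow (sub_nonneg.2 hx.2)]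
  push_cast
  rfl

lemma integrableOn_rpow_mul_one_sub_rpow {a b : ℝ} (ha : 0 < a) (hb : 0 < b) :
    IntegrableOn (fun x : ℝ => x ^ (a - 1) * (1 - x) ^ (b - 1)) (Ioo 0 1) := by
  have hC : IntegrableOn (fun x : ℝ => ((x ^ (a - 1) * (1 - x) ^ (b - 1) : ℝ) : ℂ)) (Ioc 0 1) :=
    ((intervalIntegrable_iff_integrableOn_Ioc_of_le zero_le_one).mp
      (Complex.betaIntegral_convergent (by simpa) (by simpa))).congr_fun
      (fun x hx => (ofReal_rpow_mul_one_sub_rpow a b hx).symm) measurableSet_Ioc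
  exact (hC.mono_set Ioo_subset_Ioc_self).re

lemma integral_rpow_mul_one_sub_rpow {a b : ℝ} (ha : 0 < a) (hb : 0 < b) :
    ∫ x in Ioo (0 : ℝ) 1, x ^ (a - 1) * (1 - x) ^ (b - 1) =
      Real.Gamma a * Real.Gamma b / Real.Gamma (a + b) := by
  have h := Complex.betaIntegral_eq_Gamma_mul_div a b (by simpa) (by simpa)
  rw [Complex.betaIntegral, intervalIntegral.integral_of_le zero_le_one,
    setIntegral_congr_fun measurableSet_Ioc
      (fun x hx => (ofReal_rpow_mul_one_sub_rpow a b hx).symm),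
    integral_complex_ofReal, ← Complex.ofReal_add, Complex.Gamma_ofReal, Complex.Gamma_ofReal,
    Complex.Gamma_ofReal, integral_Ioc_eq_integral_Ioo] at h
  exact_mod_cast h

lemma integrableOn_and_integral_eq_of_beta_substitution {φ φ' g : ℝ → ℝ} {S : Set ℝ}
    {a b c : ℝ} (ha : 0 < a) (hb : 0 < b) (himage : φ '' Ioo 0 1 = S)
    (hderiv : ∀ x ∈ Ioo (0 : ℝ) 1, HasDerivAt φ (φ' x) x) (hinj : InjOn φ (Ioo 0 1))
    (hkernel : ∀ x ∈ Ioo (0 : ℝ) 1, |φ' x| * g (φ x) = c * (x ^ (a - 1) * (1 - x) ^ (b - 1))) :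
    IntegrableOn g S ∧
      ∫ z in S, g z = c * (Real.Gamma a * Real.Gamma b / Real.Gamma (a + b)) := by
  have hderiv' x (hx : x ∈ Ioo (0 : ℝ) 1) := (hderiv x hx).hasDerivWithinAt (s := Ioo 0 1)
  subst himage
  constructor
  · rw [integrableOn_image_iff_integrableOn_abs_deriv_smul measurableSet_Ioo hderiv' hinj]
    exact IntegrableOn.congr_fun ((integrableOn_rpow_mul_one_sub_rpow ha hb).const_mul c)
      (fun x hx => (hkernel x hx).symm) measurableSet_Ioo
  · rw [integral_image_eq_integral_abs_deriv_smul measurableSet_Ioo hderiv' hinj]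
    simp only [smul_eq_mul]
    rw [setIntegral_congr_fun measurableSet_Ioo hkernel, integral_const_mul,
      integral_rpow_mul_one_sub_rpow ha hb]

lemma rpow_neg_one_third_image_Ioo :
    (fun u : ℝ => u ^ (-(1 : ℝ) / 3)) '' Ioo 0 1 = Ioi 1 := by
  ext y
  constructor
  · rintro ⟨u, hu, rfl⟩
    exact (one_lt_rpow_iff_of_pos hu.1).2 (Or.inr ⟨hu.2, by norm_num⟩)
  · intro (hy : 1 < y)
    have hy0 : 0 < y := one_pos.trans hy
    refine ⟨y ^ (-(3 : ℝ)), ⟨by positivity, rpow_lt_one_of_one_lt_of_neg hy (by norm_num)⟩, ?_⟩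
    simp only [← rpow_mul hy0.le]
    norm_num

lemma abs_deriv_mul_inv_sqrt_cube_sub_one {u : ℝ} (hu : u ∈ Ioo (0 : ℝ) 1) :
    |(-(1 : ℝ) / 3) * u ^ (-(1 : ℝ) / 3 - 1)| * (1 / √((u ^ (-(1 : ℝ) / 3)) ^ 3 - 1)) =
      1 / 3 * (u ^ ((1 : ℝ) / 6 - 1) * (1 - u) ^ ((1 : ℝ) / 2 - 1)) := by
  obtain ⟨hu0, hu1⟩ := hu
  have hcube : (u ^ (-(1 : ℝ) / 3)) ^ 3 - 1 = (1 - u) / u := by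
    rw [← rpow_natCast, ← rpow_mul hu0.le]
    norm_num [rpow_neg_one]
    field_simp
  have hexp : u ^ (-(1 : ℝ) / 3 - 1) * √u = u ^ ((1 : ℝ) / 6 - 1) := by
    rw [sqrt_eq_rpow, ← rpow_add hu0]
    norm_num
  have hsqrt : (1 - u) ^ ((1 : ℝ) / 2 - 1) = (√(1 - u))⁻¹ := by
    rw [show (1 : ℝ) / 2 - 1 = -(1 / 2) by norm_num, rpow_neg (by linarith),
      sqrt_eq_rpow]
  rw [hcube, abs_mul, abs_of_pos (by positivity : 0 < u ^ (-(1 : ℝ) / 3 - 1)), hsqrt,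
    sqrt_div (by linarith), one_div_div, ← hexp]
  norm_num
  ring

lemma integral_inv_sqrt_cube_sub_one_Ioi_one :
    IntegrableOn (fun z : ℝ => 1 / √(z ^ 3 - 1)) (Ioi 1) ∧
      ∫ z in Ioi (1 : ℝ), 1 / √(z ^ 3 - 1) = 2 * √π * Real.Gamma (7 / 6) / Real.Gamma (2 / 3) := by
  obtain ⟨hint, hval⟩ := integrableOn_and_integral_eq_of_beta_substitution
    (g := fun z => 1 / √(z ^ 3 - 1)) (by norm_num) (by norm_num) rpow_neg_one_third_image_Ioo
    (fun u hu => hasDerivAt_rpow_const (Or.inl hu.1.ne'))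
    (fun u hu v hv => rpow_left_injOn (by norm_num) hu.1.le hv.1.le)
    (fun u hu => abs_deriv_mul_inv_sqrt_cube_sub_one hu)
  refine ⟨hint, hval.trans ?_⟩
  rw [show (7 / 6 : ℝ) = 1 / 6 + 1 by norm_num, Gamma_add_one (by norm_num),
    Gamma_one_half_eq]
  norm_num
  ring

lemma neg_rpow_one_third_image_Ioo :
    (fun t : ℝ => -t ^ ((1 : ℝ) / 3)) '' Ioo 0 1 = Ioo (-1) 0 := by
  ext y
  constructor
  · rintro ⟨t, ⟨ht0, ht1⟩, rfl⟩
    have hpos : 0 < t ^ ((1 : ℝ) / 3) := by positivity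
    have hlt : t ^ ((1 : ℝ) / 3) < 1 := rpow_lt_one ht0.le ht1 (by norm_num)
    constructor <;> simp only <;> linarith
  · rintro ⟨hy1, hy0⟩
    have hny : 0 < -y := by linarith
    refine ⟨(-y) ^ (3 : ℝ), ⟨rpow_pos_of_pos hny _, rpow_lt_one hny.le (by linarith) (by norm_num)⟩,
      ?_⟩
    simp only [← rpow_mul hny.le]
    norm_num

lemma abs_deriv_mul_inv_sqrt_cube_add_one_of_neg {t : ℝ} (ht : t ∈ Ioo (0 : ℝ) 1) :
    |-(1 / 3 * t ^ ((1 : ℝ) / 3 - 1))| * (1 / √((-t ^ ((1 : ℝ) / 3)) ^ 3 + 1)) =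
      1 / 3 * (t ^ ((1 : ℝ) / 3 - 1) * (1 - t) ^ ((1 : ℝ) / 2 - 1)) := by
  obtain ⟨ht0, ht1⟩ := ht
  have hcube : (-t ^ ((1 : ℝ) / 3)) ^ 3 + 1 = 1 - t := by
    rw [Odd.neg_pow (by decide), ← rpow_natCast, ← rpow_mul ht0.le]
    norm_num
    ring
  have hsqrt : (1 - t) ^ ((1 : ℝ) / 2 - 1) = (√(1 - t))⁻¹ := by
    rw [show (1 : ℝ) / 2 - 1 = -(1 / 2) by norm_num, rpow_neg (by linarith),
      sqrt_eq_rpow]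
  rw [hcube, abs_neg, abs_of_pos (by positivity), hsqrt]
  ring

lemma integral_inv_sqrt_cube_add_one_Ioo_neg_one_zero :
    IntegrableOn (fun z : ℝ => 1 / √(z ^ 3 + 1)) (Ioo (-1) 0) ∧
      ∫ z in Ioo (-1 : ℝ) 0, 1 / √(z ^ 3 + 1) =
        1 / 3 * (Real.Gamma (1 / 3) * Real.Gamma (1 / 2) / Real.Gamma (1 / 3 + 1 / 2)) :=
  integrableOn_and_integral_eq_of_beta_substitution (by norm_num) (by norm_num)
    neg_rpow_one_third_image_Ioo
    (fun t ht => (hasDerivAt_rpow_const (Or.inl ht.1.ne')).neg)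
    (fun t ht s hs h => rpow_left_injOn (by norm_num) ht.1.le hs.1.le (neg_inj.1 h))
    (fun t ht => abs_deriv_mul_inv_sqrt_cube_add_one_of_neg ht)

lemma inv_sub_one_pos {u : ℝ} (hu : u ∈ Ioo (0 : ℝ) 1) : 0 < u⁻¹ - 1 :=
  sub_pos.2 ((one_lt_inv₀ hu.1).2 hu.2)

lemma inv_sub_one_rpow_one_third_image_Ioo :
    (fun u : ℝ => (u⁻¹ - 1) ^ ((1 : ℝ) / 3)) '' Ioo 0 1 = Ioi 0 := by
  ext y
  constructor
  · rintro ⟨u, hu, rfl⟩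
    exact rpow_pos_of_pos (inv_sub_one_pos hu) _
  · intro (hy : 0 < y)
    refine ⟨(1 + y ^ 3)⁻¹, ⟨by positivity, inv_lt_one_of_one_lt₀ (by nlinarith [pow_pos hy 3])⟩, ?_⟩
    simp only [inv_inv, add_sub_cancel_left, ← rpow_natCast y 3, ← rpow_mul hy.le]
    norm_num

lemma abs_deriv_mul_inv_sqrt_cube_add_one_of_pos {u : ℝ} (hu : u ∈ Ioo (0 : ℝ) 1) :
    |-(u ^ 2)⁻¹ * (1 / 3) * (u⁻¹ - 1) ^ ((1 : ℝ) / 3 - 1)| *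
        (1 / √(((u⁻¹ - 1) ^ ((1 : ℝ) / 3)) ^ 3 + 1)) =
      1 / 3 * (u ^ ((1 : ℝ) / 6 - 1) * (1 - u) ^ ((1 : ℝ) / 3 - 1)) := by
  have hcube : ((u⁻¹ - 1) ^ ((1 : ℝ) / 3)) ^ 3 + 1 = u⁻¹ := by
    rw [← rpow_natCast, ← rpow_mul (inv_sub_one_pos hu).le]
    norm_num
  obtain ⟨hu0, hu1⟩ := hu
  have hq : u⁻¹ - 1 = (1 - u) / u := by field_simp
  have hsqrt : 1 / √u⁻¹ = u ^ ((1 : ℝ) / 2) := by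
    rw [sqrt_inv, one_div, inv_inv, sqrt_eq_rpow]
  have hquot : (u⁻¹ - 1) ^ ((1 : ℝ) / 3 - 1) = (1 - u) ^ ((1 : ℝ) / 3 - 1) * u ^ ((2 : ℝ) / 3) := by
    rw [hq, div_rpow (by linarith) hu0.le, div_eq_mul_inv, ← rpow_neg hu0.le]
    norm_num
  have hexp : (u ^ 2)⁻¹ * u ^ ((2 : ℝ) / 3) * u ^ ((1 : ℝ) / 2) = u ^ ((1 : ℝ) / 6 - 1) := by
    rw [← rpow_natCast, ← rpow_neg hu0.le, ← rpow_add hu0, ← rpow_add hu0]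
    norm_num
  have h1u : 0 < 1 - u := by linarith
  rw [hcube, hsqrt, hquot, neg_mul, neg_mul, abs_neg, abs_of_pos (by positivity), ← hexp]
  ring

lemma integral_inv_sqrt_cube_add_one_Ioi_zero :
    IntegrableOn (fun z : ℝ => 1 / √(z ^ 3 + 1)) (Ioi 0) ∧
      ∫ z in Ioi (0 : ℝ), 1 / √(z ^ 3 + 1) =
        1 / 3 * (Real.Gamma (1 / 6) * Real.Gamma (1 / 3) / Real.Gamma (1 / 6 + 1 / 3)) :=
  integrableOn_and_integral_eq_of_beta_substitution (by norm_num) (by norm_num)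
    inv_sub_one_rpow_one_third_image_Ioo
    (fun u hu => ((hasDerivAt_inv hu.1.ne').sub_const 1).rpow_const
      (Or.inl (inv_sub_one_pos hu).ne'))
    (fun u hu v hv h => inv_injective (sub_left_injective (rpow_left_injOn (by norm_num)
      (inv_sub_one_pos hu).le (inv_sub_one_pos hv).le h)))
    (fun u hu => abs_deriv_mul_inv_sqrt_cube_add_one_of_pos hu)

lemma Gamma_one_sixth_mul_Gamma_five_sixths : Real.Gamma (1 / 6) * Real.Gamma (5 / 6) = 2 * π := by
  rw [show (5 / 6 : ℝ) = 1 - 1 / 6 by norm_num, Gamma_mul_Gamma_one_sub,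
    show π * (1 / 6) = π / 6 by ring, sin_pi_div_six]
  ring

lemma integral_inv_sqrt_cube_add_one_Ioi_neg_one :
    IntegrableOn (fun z : ℝ => 1 / √(z ^ 3 + 1)) (Ioi (-1)) ∧
      ∫ z in Ioi (-1 : ℝ), 1 / √(z ^ 3 + 1) = √π * Real.Gamma (1 / 3) / Real.Gamma (5 / 6) := by
  obtain ⟨hintNeg, hvalNeg⟩ := integral_inv_sqrt_cube_add_one_Ioo_neg_one_zero
  obtain ⟨hintPos, hvalPos⟩ := integral_inv_sqrt_cube_add_one_Ioi_zero
  have hsplit : Ioc (-1 : ℝ) 0 ∪ Ioi 0 = Ioi (-1) := Ioc_union_Ioi_eq_Ioi (by norm_num)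
  have hintNeg' := hintNeg.congr_set_ae Ioo_ae_eq_Ioc.symm
  refine ⟨hsplit ▸ hintNeg'.union hintPos, ?_⟩
  rw [← hsplit, setIntegral_union (Ioc_disjoint_Ioi le_rfl) measurableSet_Ioi hintNeg' hintPos,
    integral_Ioc_eq_integral_Ioo, hvalNeg, hvalPos]
  norm_num only [Gamma_one_half_eq]
  have hreflect := Gamma_one_sixth_mul_Gamma_five_sixths
  have hsq : √π ^ 2 = π := sq_sqrt pi_pos.le
  have : Real.Gamma (5 / 6) ≠ 0 := (Gamma_pos_of_pos (by norm_num)).ne'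
  have : √π ≠ 0 := (sqrt_pos.2 pi_pos).ne'
  field_simp
  linear_combination hreflect - 2 * hsq

lemma pStar_rpow_neg_two_thirds :
    pStar ^ (-(2 : ℝ) / 3) =
      3 / 2 * (3 / 2) ^ ((1 : ℝ) / 3) * π ^ 2 / Real.Gamma (1 / 4) ^ ((8 : ℝ) / 3) := by
  have hΓ : 0 < Real.Gamma (1 / 4) := Gamma_pos_of_pos (by norm_num)
  have hpStar : pStar = ((3 / 2) ^ 2 * π ^ 3)⁻¹ * Real.Gamma (1 / 4) ^ 4 := by
    rw [pStar]; ring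
  have hthree_halves : ((3 : ℝ) / 2) ^ ((4 : ℝ) / 3) = 3 / 2 * (3 / 2) ^ ((1 : ℝ) / 3) := by
    rw [show (4 : ℝ) / 3 = 1 + 1 / 3 by norm_num, rpow_add (by norm_num), rpow_one]
  rw [hpStar, mul_rpow (by positivity) (by positivity), inv_rpow (by positivity),
    mul_rpow (by positivity) (by positivity), ← rpow_natCast_mul (by norm_num),
    ← rpow_natCast_mul pi_pos.le, ← rpow_natCast_mul hΓ.le, ← hthree_halves,
    show ((2 : ℕ) : ℝ) * (-(2 : ℝ) / 3) = -(4 / 3) by norm_num,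
    show ((3 : ℕ) : ℝ) * (-(2 : ℝ) / 3) = -((2 : ℕ) : ℝ) by norm_num,
    show ((4 : ℕ) : ℝ) * (-(2 : ℝ) / 3) = -(8 / 3) by norm_num,
    rpow_neg (by norm_num), rpow_neg pi_pos.le, rpow_neg hΓ.le, rpow_natCast, mul_inv, inv_inv,
    inv_inv]
  ring

/-- The integrals `∫_{-1}^∞ (z³+1)^{-1/2} dz` and `∫_{1}^∞ (z³-1)^{-1/2} dz` converge
and `(1/2)p*^{-2/3}` times them admit explicit closed-form evaluations in terms of
the Gamma function. -/
theorem Cpm_closed_form :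
    IntegrableOn (fun z : ℝ => 1 / Real.sqrt (z ^ 3 + 1)) (Set.Ioi (-1 : ℝ)) ∧
    IntegrableOn (fun z : ℝ => 1 / Real.sqrt (z ^ 3 - 1)) (Set.Ioi (1 : ℝ)) ∧
    (1 / 2) * pStar ^ (-(2 : ℝ) / 3) *
        (∫ z in Set.Ioi (-1 : ℝ), 1 / Real.sqrt (z ^ 3 + 1)) =
      3 * (3 / 2) ^ ((1 : ℝ) / 3) * π ^ ((5 : ℝ) / 2) * Real.Gamma (1 / 3) /
        (4 * Real.Gamma (1 / 4) ^ ((8 : ℝ) / 3) * Real.Gamma (5 / 6)) ∧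
    (1 / 2) * pStar ^ (-(2 : ℝ) / 3) *
        (∫ z in Set.Ioi (1 : ℝ), 1 / Real.sqrt (z ^ 3 - 1)) =
      3 * (3 / 2) ^ ((1 : ℝ) / 3) * π ^ ((5 : ℝ) / 2) * Real.Gamma (7 / 6) /
        (2 * Real.Gamma (1 / 4) ^ ((8 : ℝ) / 3) * Real.Gamma (2 / 3)) := by
  obtain ⟨hint_add, hval_add⟩ := integral_inv_sqrt_cube_add_one_Ioi_neg_one
  obtain ⟨hint_sub, hval_sub⟩ := integral_inv_sqrt_cube_sub_one_Ioi_one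
  have hpi : π ^ ((5 : ℝ) / 2) = √π * π ^ 2 := by
    rw [show (5 : ℝ) / 2 = 1 / 2 + (2 : ℕ) by norm_num, rpow_add_natCast pi_ne_zero,
      ← sqrt_eq_rpow]
  have : Real.Gamma (1 / 4) ^ ((8 : ℝ) / 3) ≠ 0 :=
    (rpow_pos_of_pos (Gamma_pos_of_pos (by norm_num)) _).ne'
  have : Real.Gamma (5 / 6) ≠ 0 := (Gamma_pos_of_pos (by norm_num)).ne'
  have : Real.Gamma (2 / 3) ≠ 0 := (Gamma_pos_of_pos (by norm_num)).ne'
  refine ⟨hint_add, hint_sub, ?_, ?_⟩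
  · rw [hval_add, pStar_rpow_neg_two_thirds, hpi]
    field_simp
    ring
  · rw [hval_sub, pStar_rpow_neg_two_thirds, hpi]
    field_simp
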